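/- arXiv:2212.11635 — 5 statements merged into one kernel-verified Lean document; each statement's English description precedes it below -/
import Mathlib

section
/- Let p be a prime and f(T) = Σ_{n≥0} B_n T^n ∈ Q_p[[T]] with ord_p(B_n) ≥ -ord_p(n) + α(n) for all n ≥ 1, where α : N → Z is a (not necessarily strictly) decreasing function. Let g(t) = Σ_{i≥1} b_i t^i with all b_i ∈ Z_p. Then the composite f(g(t)) = B_0 + Σ_{n≥1} C_n t^n satisfies ord_p(C_n) ≥ -ord_p(n) + α(n) for all n ≥ 1. -/
/-!
Differentiating `g ^ m` gives `n · [tⁿ] g ^ m = m · [tⁿ⁻¹] (g ^ (m-1) g')`, and the right-hand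
coefficient is a `p`-adic integer, so `ord_p([tⁿ] g ^ m) ≥ ord_p(m) - ord_p(n)`. Hence the term
`Bₘ [tⁿ] g ^ m` of `Cₙ` has valuation at least `-ord_p(n) + α(m) ≥ -ord_p(n) + α(n)` for `m ≤ n`,
and the ultrametric inequality passes this bound to the sum.
-/

open PowerSeries

theorem PowerSeries.succ_mul_coeff_succ_pow {R : Type*} [CommSemiring R] (f : R⟦X⟧) (k m : ℕ) :
    ((k + 1 : ℕ) : R) * coeff (k + 1) (f ^ m) = m * coeff k (f ^ (m - 1) * d⁄dX R f) := by
  have h := congrArg (coeff k) (Derivation.leibniz_pow (d⁄dX R) (a := f) m)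
  rw [coeff_derivative, smul_eq_mul, map_nsmul, nsmul_eq_mul] at h
  rw [mul_comm]
  exact_mod_cast h

section

variable {p : ℕ} [Fact p.Prime]

theorem PadicInt.norm_natCast_mul_coeff_pow_le (G : ℤ_[p]⟦X⟧) (n m : ℕ) :
    ‖(n : ℤ_[p]) * coeff n (G ^ m)‖ ≤ ‖(m : ℤ_[p])‖ := by
  cases n with
  | zero => simp
  | succ k =>
    rw [succ_mul_coeff_succ_pow, norm_mul]
    exact mul_le_of_le_one_right (norm_nonneg _) (PadicInt.norm_le_one _)

theorem Padic.norm_natCast_mul_coeff_map_pow_le (G : ℤ_[p]⟦X⟧) (n m : ℕ) :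
    ‖(n : ℚ_[p]) * coeff n (G.map PadicInt.Coe.ringHom ^ m)‖ ≤ ‖(m : ℚ_[p])‖ := by
  rw [← map_pow, coeff_map]
  exact_mod_cast PadicInt.norm_natCast_mul_coeff_pow_le G n m

theorem Padic.norm_natCast_mul_le_zpow_iff {n : ℕ} (hn : n ≠ 0) {x : ℚ_[p]} (hx : x ≠ 0)
    (a : ℤ) : ‖(n : ℚ_[p]) * x‖ ≤ (p : ℝ) ^ (-a) ↔ -(padicValNat p n : ℤ) + a ≤ x.valuation := by
  have hp : (1 : ℝ) < p := by exact_mod_cast (Fact.out : p.Prime).one_lt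
  rw [norm_mul, Padic.norm_eq_zpow_neg_valuation (Nat.cast_ne_zero.mpr hn),
    Padic.norm_eq_zpow_neg_valuation hx, Padic.valuation_natCast, ← zpow_add₀ (by positivity),
    zpow_le_zpow_iff_right₀ hp]
  omega

end

/-- If `f(T) = Σ Bₙ Tⁿ ∈ ℚ_p[[T]]` has `ord_p(Bₙ) ≥ -ord_p(n) + α(n)` for
`n ≥ 1` with `α` a decreasing function, and `g(t) = Σ_{i≥1} bᵢ tⁱ` has `ℤ_p` coefficients and
zero constant term, then the coefficients `Cₙ` of the composite `f(g(t)) = B₀ + Σ_{n≥1} Cₙ tⁿ`,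
given by `Cₙ = Σ_{m=1}^n Bₘ · (coefficient of tⁿ in g^m)`, satisfy
`ord_p(Cₙ) ≥ -ord_p(n) + α(n)` for all `n ≥ 1`. -/
theorem stmt_0 (p : ℕ) [Fact p.Prime]
    (B : ℕ → ℚ_[p]) (α : ℕ → ℤ) (hα : ∀ m n : ℕ, m ≤ n → α n ≤ α m)
    (hB : ∀ n : ℕ, 1 ≤ n → B n ≠ 0 →
      -(padicValNat p n : ℤ) + α n ≤ (B n).valuation)
    (b : ℕ → ℤ_[p])
    (g : PowerSeries ℚ_[p])
    (hg : g = PowerSeries.mk fun i => if i = 0 then 0 else ((b i : ℚ_[p])))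
    (C : ℕ → ℚ_[p])
    (hC : ∀ n : ℕ, 1 ≤ n →
      C n = ∑ m ∈ Finset.Icc 1 n, B m * PowerSeries.coeff n (g ^ m)) :
    ∀ n : ℕ, 1 ≤ n → C n ≠ 0 →
      -(padicValNat p n : ℤ) + α n ≤ (C n).valuation := by
  intro n hn hCn
  have hg_int : g = (mk fun i => if i = 0 then 0 else b i).map PadicInt.Coe.ringHom := by
    ext i
    rw [hg, coeff_map, coeff_mk, coeff_mk, apply_ite PadicInt.Coe.ringHom, map_zero]
    rfl
  have hB_norm : ∀ m : ℕ, 1 ≤ m → ‖(m : ℚ_[p]) * B m‖ ≤ (p : ℝ) ^ (-α m) := by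
    intro m hm
    by_cases hBm : B m = 0
    · simp only [hBm, mul_zero, norm_zero]
      positivity
    · exact (Padic.norm_natCast_mul_le_zpow_iff (by omega) hBm _).mpr (hB m hm hBm)
  rw [← Padic.norm_natCast_mul_le_zpow_iff (by omega) hCn, hC n hn, Finset.mul_sum]
  refine IsUltrametricDist.norm_sum_le_of_forall_le_of_nonneg (by positivity) fun m hm => ?_
  obtain ⟨hm1, hmn⟩ := Finset.mem_Icc.mp hm
  have hp : (1 : ℝ) ≤ p := by exact_mod_cast (Fact.out : p.Prime).one_lt.le
  calc ‖(n : ℚ_[p]) * (B m * coeff n (g ^ m))‖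
      = ‖B m‖ * ‖(n : ℚ_[p]) * coeff n (g ^ m)‖ := by simp only [norm_mul]; ring
    _ ≤ ‖B m‖ * ‖(m : ℚ_[p])‖ := by
        gcongr
        rw [hg_int]
        exact Padic.norm_natCast_mul_coeff_map_pow_le _ n m
    _ = ‖(m : ℚ_[p]) * B m‖ := by rw [norm_mul, mul_comm]
    _ ≤ (p : ℝ) ^ (-α m) := hB_norm m hm1
    _ ≤ (p : ℝ) ^ (-α n) := zpow_le_zpow_right₀ hp (by linarith [hα m n hmn])
end

section
/- Let p be a prime, and suppose i_1,...,i_n are nonnegative integers with Σ_k i_k = m and Σ_k k·i_k = n, where m ≥ 1. Then there exists an index k ∈ {1,...,n} with i_k ≥ 1 and ord_p(i_k) ≤ ord_p(n). -/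
/-- If `i₁,…,iₙ ≥ 0` satisfy `Σ iₖ = m ≥ 1` and `Σ k·iₖ = n`, then some index
`k ∈ {1,…,n}` has `iₖ ≥ 1` and `ord_p(iₖ) ≤ ord_p(n)`. -/
theorem stmt_1 (p : ℕ) [Fact p.Prime] (n m : ℕ) (hm : 1 ≤ m) (i : ℕ → ℕ)
    (hsum : ∑ k ∈ Finset.Icc 1 n, i k = m)
    (hwt : ∑ k ∈ Finset.Icc 1 n, k * i k = n) :
    ∃ k ∈ Finset.Icc 1 n, 1 ≤ i k ∧ padicValNat p (i k) ≤ padicValNat p n := by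
  have hn : n ≠ 0 := by
    rintro rfl
    simp at hsum; omega
  by_contra h
  push_neg at h
  set v := padicValNat p n with hv
  have hdvd : p ^ (v + 1) ∣ n := by
    rw [← hwt]
    apply Finset.dvd_sum
    intro k hk
    rcases Nat.eq_zero_or_pos (i k) with h0 | h1
    · simp [h0]
    · have hlt := h k hk h1
      have hd : p ^ (v + 1) ∣ i k := by
        exact (padicValNat_dvd_iff_le h1.ne').mpr hlt
      exact hd.mul_left k
  have : v + 1 ≤ v := by
    rw [hv]
    exact (padicValNat_dvd_iff_le hn).mp hdvd
  omega
end

section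
/- Let p be a prime and consider the formal square of an integral over Z_p: if I(T) = Σ_{n≥1} (c_{n-1}/n) T^n with all c_i ∈ Z_p, then I(T)^2 = Σ_{n≥2} α_n T^n with ord_p(α_n) ≥ -⌊log_p(n-1)⌋ - ord_p(n) for all n ≥ 2. -/
private lemma val_sum_ge {p : ℕ} [Fact p.Prime] {ι : Type*} (s : Finset ι) (f : ι → ℚ_[p])
    (v : ℤ) (h : ∀ i ∈ s, f i ≠ 0 → v ≤ (f i).valuation) (hs : (∑ i ∈ s, f i) ≠ 0) :
    v ≤ (∑ i ∈ s, f i).valuation := by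
  classical
  induction s using Finset.induction_on with
  | empty => simp at hs
  | @insert a t ha ih =>
    rw [Finset.sum_insert ha] at hs ⊢
    by_cases h1 : f a = 0
    · rw [h1, zero_add] at hs ⊢
      exact ih (fun i hi => h i (Finset.mem_insert_of_mem hi)) hs
    by_cases h2 : (∑ i ∈ t, f i) = 0
    · rw [h2, add_zero] at hs ⊢
      exact h a (Finset.mem_insert_self a t) h1
    refine le_trans ?_ (Padic.le_valuation_add hs)
    exact le_min (h a (Finset.mem_insert_self a t) h1)
      (ih (fun i hi => h i (Finset.mem_insert_of_mem hi)) h2)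

/-- If `I(T) = Σ_{n≥1} (c_{n-1}/n) Tⁿ` with all `cᵢ ∈ ℤ_p`, then
`I(T)² = Σ_{n≥2} αₙ Tⁿ` where `αₙ = Σ_{0<i<n} (c_{i-1}/i)(c_{n-i-1}/(n-i))` satisfies
`ord_p(αₙ) ≥ -⌊log_p(n-1)⌋ - ord_p(n)` for all `n ≥ 2`. -/
theorem stmt_4 (p : ℕ) [Fact p.Prime] (c : ℕ → ℤ_[p]) (A : ℕ → ℚ_[p])
    (hA : ∀ n : ℕ, A n = ∑ i ∈ Finset.Ioo 0 n,
      ((c (i - 1) : ℚ_[p]) / (i : ℚ_[p])) * ((c (n - i - 1) : ℚ_[p]) / ((n - i : ℕ) : ℚ_[p]))) :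
    ∀ n : ℕ, 2 ≤ n → A n ≠ 0 →
      -(Nat.log p (n - 1) : ℤ) - (padicValNat p n : ℤ) ≤ (A n).valuation := by
  intro n hn hA0
  rw [hA n] at hA0 ⊢
  refine val_sum_ge _ _ _ (fun i hi ht => ?_) hA0
  rw [Finset.mem_Ioo] at hi
  obtain ⟨hi0, hin⟩ := hi
  have hni : 0 < n - i := Nat.sub_pos_of_lt hin
  -- components nonzero
  have hx : ((c (i - 1) : ℚ_[p]) / (i : ℚ_[p])) ≠ 0 := fun h => ht (by rw [h, zero_mul])
  have hy : ((c (n - i - 1) : ℚ_[p]) / ((n - i : ℕ) : ℚ_[p])) ≠ 0 :=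
    fun h => ht (by rw [h, mul_zero])
  have hc1 : (c (i - 1) : ℚ_[p]) ≠ 0 := fun h => hx (by rw [h, zero_div])
  have hc2 : (c (n - i - 1) : ℚ_[p]) ≠ 0 := fun h => hy (by rw [h, zero_div])
  have hiQ : ((i : ℕ) : ℚ_[p]) ≠ 0 := Nat.cast_ne_zero.mpr hi0.ne'
  have hniQ : (((n - i : ℕ) : ℕ) : ℚ_[p]) ≠ 0 := Nat.cast_ne_zero.mpr hni.ne'
  -- valuation of a quotient
  have hdiv : ∀ (x : ℚ_[p]) (m : ℕ), x ≠ 0 → (m : ℚ_[p]) ≠ 0 →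
      (x / (m : ℚ_[p])).valuation = x.valuation - (padicValNat p m : ℤ) := by
    intro x m hx hm
    have : (x / (m : ℚ_[p])) * (m : ℚ_[p]) = x := div_mul_cancel₀ x hm
    have h2 := Padic.valuation_mul (p := p) (div_ne_zero hx hm) hm
    rw [this, Padic.valuation_natCast] at h2
    omega
  have hval : (((c (i - 1) : ℚ_[p]) / (i : ℚ_[p])) *
      ((c (n - i - 1) : ℚ_[p]) / ((n - i : ℕ) : ℚ_[p]))).valuation =
      (c (i - 1) : ℚ_[p]).valuation + (c (n - i - 1) : ℚ_[p]).valuation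
        - (padicValNat p i : ℤ) - (padicValNat p (n - i) : ℤ) := by
    rw [Padic.valuation_mul hx hy, hdiv _ _ hc1 hiQ, hdiv _ _ hc2 hniQ]
    ring
  rw [hval]
  -- valuations of coerced p-adic integers are nonneg
  have hv1 : 0 ≤ (c (i - 1) : ℚ_[p]).valuation := by
    rw [← Padic.norm_le_one_iff_val_nonneg]; exact (c (i - 1)).2
  have hv2 : 0 ≤ (c (n - i - 1) : ℚ_[p]).valuation := by
    rw [← Padic.norm_le_one_iff_val_nonneg]; exact (c (n - i - 1)).2
  -- key arithmetic: v(i) + v(n-i) ≤ log_p (n-1) + v(n)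
  have hmin : min (padicValNat p i) (padicValNat p (n - i)) ≤ padicValNat p n := by
    rw [← padicValNat_dvd_iff_le (by omega : n ≠ 0)]
    have d1 : p ^ min (padicValNat p i) (padicValNat p (n - i)) ∣ i :=
      dvd_trans (pow_dvd_pow p (min_le_left _ _)) (pow_padicValNat_dvd)
    have d2 : p ^ min (padicValNat p i) (padicValNat p (n - i)) ∣ n - i :=
      dvd_trans (pow_dvd_pow p (min_le_right _ _)) (pow_padicValNat_dvd)
    have he : i + (n - i) = n := by omega
    have := dvd_add d1 d2
    rwa [he] at this
  have hl1 : padicValNat p i ≤ Nat.log p (n - 1) :=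
    le_trans (padicValNat_le_nat_log i) (Nat.log_mono_right (by omega))
  have hl2 : padicValNat p (n - i) ≤ Nat.log p (n - 1) :=
    le_trans (padicValNat_le_nat_log (n - i)) (Nat.log_mono_right (by omega))
  have key : (padicValNat p i : ℤ) + (padicValNat p (n - i) : ℤ) ≤
      (Nat.log p (n - 1) : ℤ) + (padicValNat p n : ℤ) := by
    rcases min_cases (padicValNat p i) (padicValNat p (n - i)) with ⟨hm, _⟩ | ⟨hm, _⟩ <;>
      rw [hm] at hmin <;> omega
  omega
end

section
/- Let p be a prime and τ ∈ Frac(Z_p[[T]]) of the form τ = p^k · g(T) with k ∈ Z and g(T) ∈ Z_p[[T]] \ p·Z_p[[T]]. Suppose τ converges and satisfies |τ(T₀)|_p < 1 for all T₀ ∈ C_p with |T₀|_p < 1 at which it is defined, and that τ has no poles on the open unit disc. Then k ≥ 0, i.e., τ ∈ Z_p[[T]], and moreover the constant term of τ lies in p·Z_p. -/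
/-!
Let `n` be the index of the first coefficient of `g` that is a unit. For `|T₀|` close enough
to `1` the term `c_n T₀ⁿ` strictly dominates all others, so by the ultrametric inequality
`|g(T₀)| = |T₀|ⁿ`, which can be made larger than `1/p`; then `|p^k| · |T₀|ⁿ < 1` forces `k ≥ 0`.
The bound on the constant term is the hypothesis at `T₀ = 0`, since `|·| < 1` means `|·| ≤ 1/p`
on `ℚ_p`.
-/

theorem IsUltrametricDist.norm_tsum_eq_norm_of_forall_ne_le {E ι : Type*}
    [NormedAddCommGroup E] [IsUltrametricDist E] [DecidableEq ι] {f : ι → E}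
    (hf : Summable f) {i : ι} {C : ℝ} (hC₀ : 0 ≤ C) (hC : ∀ j ≠ i, ‖f j‖ ≤ C)
    (hCi : C < ‖f i‖) : ‖∑' j, f j‖ = ‖f i‖ := by
  have htail : ‖∑' j, if j = i then 0 else f j‖ < ‖f i‖ := by
    refine (norm_tsum_le_of_forall_le_of_nonneg hC₀ fun j => ?_).trans_lt hCi
    split_ifs with hj
    · simpa using hC₀
    · exact hC j hj
  rw [hf.tsum_eq_add_tsum_ite i, norm_add_eq_max_of_norm_ne_norm htail.ne',
    max_eq_left htail.le]

theorem norm_tsum_mul_pow_eq_of_dominant_coeff {K : Type*} [NormedField K] [CompleteSpace K]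
    [IsUltrametricDist K] {a : ℕ → K} {n : ℕ} {ρ : ℝ} {x : K} (ha : ∀ m, ‖a m‖ ≤ 1)
    (han : ‖a n‖ = 1) (hρ₀ : 0 ≤ ρ) (hρ : ∀ m < n, ‖a m‖ ≤ ρ) (hρx : ρ < ‖x‖ ^ n)
    (hx : ‖x‖ < 1) : ‖∑' m, a m * x ^ m‖ = ‖x‖ ^ n := by
  have hterm : ∀ m, ‖a m * x ^ m‖ ≤ ‖x‖ ^ m := fun m => by
    rw [norm_mul, norm_pow]
    exact mul_le_of_le_one_left (by positivity) (ha m)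
  have hsum : Summable fun m => a m * x ^ m :=
    .of_norm_bounded (summable_geometric_of_lt_one (norm_nonneg x) hx) hterm
  have hxn : ‖x‖ ^ (n + 1) < ‖x‖ ^ n := by
    rw [pow_succ]
    exact mul_lt_of_lt_one_right (hρ₀.trans_lt hρx) hx
  have hn : ‖a n * x ^ n‖ = ‖x‖ ^ n := by rw [norm_mul, han, one_mul, norm_pow]
  rw [← hn]
  refine IsUltrametricDist.norm_tsum_eq_norm_of_forall_ne_le hsum
    (le_max_of_le_left hρ₀) (fun m hm => ?_) (hn ▸ max_lt hρx hxn)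
  rcases hm.lt_or_gt with hlt | hgt
  · refine le_max_of_le_left ?_
    rw [norm_mul, norm_pow]
    exact mul_le_of_le_one_right (norm_nonneg _) (pow_le_one₀ (norm_nonneg x) hx.le)
      |>.trans (hρ m hlt)
  · exact le_max_of_le_right <| (hterm m).trans <|
      pow_le_pow_of_le_one (norm_nonneg x) hx.le hgt

theorem exists_lt_norm_pow_of_norm_dense {K : Type*} [Norm K]
    (hdense : ∀ r : ℝ, 0 < r → r < 1 → ∃ x : K, r < ‖x‖ ∧ ‖x‖ < 1)
    {ρ : ℝ} (hρ : ρ < 1) (n : ℕ) : ∃ x : K, ρ < ‖x‖ ^ n ∧ ‖x‖ < 1 := by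
  have hpow : Filter.Tendsto (fun r : ℝ => r ^ n) (nhdsWithin 1 (Set.Iio 1)) (nhds 1) := by
    simpa using ((continuous_pow n).tendsto (1 : ℝ)).mono_left nhdsWithin_le_nhds
  obtain ⟨r, hρr, hr₀, hr₁⟩ := ((hpow.eventually (lt_mem_nhds hρ)).and
    ((lt_mem_nhds one_pos).filter_mono nhdsWithin_le_nhds |>.and self_mem_nhdsWithin)).exists
  obtain ⟨x, hrx, hx⟩ := hdense r hr₀ hr₁
  exact ⟨x, hρr.trans_le (pow_le_pow_left₀ hr₀.le hrx.le n), hx⟩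

theorem Padic.norm_le_inv_of_norm_lt_one {p : ℕ} [Fact p.Prime] {x : ℚ_[p]} (hx : ‖x‖ < 1) :
    ‖x‖ ≤ (p : ℝ)⁻¹ := by
  simpa using (Padic.norm_lt_pow_iff_norm_le_pow_sub_one x 0).1 (by simpa using hx)

/-- Let `τ = p^k·g(T)` with `k ∈ ℤ` and `g ∈ ℤ_p[[T]] \ p·ℤ_p[[T]]`.
If `|τ(T₀)|_p < 1` for all `T₀` in the open unit disc of `ℂ_p` (modelled by a complete
ultrametric normed field `K` isometrically containing `ℚ_p` whose norms are dense in `(0,1)`),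
then `k ≥ 0`, i.e. `τ ∈ ℤ_p[[T]]`, and the constant term of `τ` lies in `p·ℤ_p`. -/
theorem stmt_11 (p : ℕ) [Fact p.Prime]
    (K : Type*) [NormedField K] [CompleteSpace K] [IsUltrametricDist K]
    (σ : ℚ_[p] →+* K) (hσ : ∀ x : ℚ_[p], ‖σ x‖ = ‖x‖)
    (hdense : ∀ r : ℝ, 0 < r → r < 1 → ∃ x : K, r < ‖x‖ ∧ ‖x‖ < 1)
    (k : ℤ) (g : PowerSeries ℤ_[p])
    (hg : ∃ n : ℕ, ‖PowerSeries.coeff n g‖ = 1)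
    (hbound : ∀ T₀ : K, ‖T₀‖ < 1 →
      ‖(σ (p : ℚ_[p])) ^ k *
        ∑' n : ℕ, σ ((PowerSeries.coeff n g : ℤ_[p]) : ℚ_[p]) * T₀ ^ n‖ < 1) :
    0 ≤ k ∧
      ‖(p : ℚ_[p]) ^ k * ((PowerSeries.coeff 0 g : ℤ_[p]) : ℚ_[p])‖ ≤ ((p : ℝ))⁻¹ := by
  classical
  have hp : (1 : ℝ) < p := mod_cast (Fact.out : p.Prime).one_lt
  have hcoeff (m : ℕ) : ‖σ ((PowerSeries.coeff m g : ℤ_[p]) : ℚ_[p])‖ = ‖PowerSeries.coeff m g‖ :=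
    (hσ _).trans (PadicInt.padic_norm_e_of_padicInt _)
  have hpk : ‖σ (p : ℚ_[p]) ^ k‖ = (p : ℝ) ^ (-k) := by
    rw [← map_zpow₀, hσ, Padic.norm_p_zpow]
  constructor
  · set n := Nat.find hg
    have hsmall (m : ℕ) (hm : m < n) :
        ‖σ ((PowerSeries.coeff m g : ℤ_[p]) : ℚ_[p])‖ ≤ (p : ℝ)⁻¹ := by
      refine (hσ _).trans_le (Padic.norm_le_inv_of_norm_lt_one ?_)
      rw [PadicInt.padic_norm_e_of_padicInt]
      exact (PadicInt.norm_le_one _).lt_of_ne (Nat.find_min hg hm)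
    obtain ⟨x, hxn, hx⟩ := exists_lt_norm_pow_of_norm_dense hdense (inv_lt_one_of_one_lt₀ hp) n
    have hgx := norm_tsum_mul_pow_eq_of_dominant_coeff
      (fun m => (hcoeff m).trans_le (PadicInt.norm_le_one _))
      ((hcoeff n).trans (Nat.find_spec hg)) (by positivity) hsmall hxn hx
    have h := hbound x hx
    rw [norm_mul, hpk, hgx] at h
    have : (p : ℝ) ^ (-k - 1) < 1 := by
      rw [zpow_sub_one₀ (by positivity)]
      calc (p : ℝ) ^ (-k) * (p : ℝ)⁻¹ < (p : ℝ) ^ (-k) * ‖x‖ ^ n := by gcongr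
        _ < 1 := h
    have := (zpow_lt_one_iff_right₀ hp).1 this
    omega
  · have h := hbound 0 (by simp)
    rw [tsum_eq_single 0 fun m hm => by simp [hm], pow_zero, mul_one, ← map_zpow₀, ← map_mul,
      hσ] at h
    exact Padic.norm_le_inv_of_norm_lt_one h
end

section
/- Let p be an odd prime and ρ : p·Z_p → Q_p a function admitting a power series expansion ρ(p·t) = Σ_{n≥0} C_n p^n t^n with ord_p(C_n) ≥ -⌊log_p(n-1)⌋ - ord_p(n) + ε for all n ≥ 2 (ε ∈ Z fixed) and ord_p(C₀), ord_p(C₁) ≥ ε. Let M ≥ 2 and let ρ_M(t) be the truncation of ρ(t) to degree < M. Then ρ_M(p·t) - ρ(p·t) ≡ 0 mod p^N for all t ∈ Z_p, where N = M - ⌊log_p(M-1)⌋ - ⌊log_p(M)⌋ + ε. -/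
/-- Step lemma: `log_p(k+1) ≤ log_p(k-1) + 1` for `k ≥ 2`, `p` prime. -/
lemma log_step (p : ℕ) (hp : 1 < p) (k : ℕ) (hk : 2 ≤ k) :
    Nat.log p (k + 1) ≤ Nat.log p (k - 1) + 1 := by
  have h1 : k - 1 < p ^ (Nat.log p (k - 1) + 1) :=
    Nat.lt_pow_succ_log_self hp _
  have h2 : k ≤ p ^ (Nat.log p (k - 1) + 1) := by omega
  have h3 : k + 1 < p ^ (Nat.log p (k - 1) + 2) := by
    have : p ^ (Nat.log p (k - 1) + 2) = p * p ^ (Nat.log p (k - 1) + 1) := by ring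
    have h4 : 2 * k ≤ p * p ^ (Nat.log p (k - 1) + 1) :=
      Nat.mul_le_mul hp h2
    omega
  have := Nat.log_lt_of_lt_pow (by omega : k + 1 ≠ 0) h3
  omega

lemma mono_key (p : ℕ) (hp : 1 < p) (M : ℕ) (hM : 2 ≤ M) :
    ∀ n, M ≤ n →
      (M : ℤ) - (Nat.log p (M - 1) : ℤ) - (Nat.log p M : ℤ) ≤
        (n : ℤ) - (Nat.log p (n - 1) : ℤ) - (Nat.log p n : ℤ) := by
  intro n hn
  induction n, hn using Nat.le_induction with
  | base => exact le_refl _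
  | succ k hk ih =>
    have hk2 : 2 ≤ k := le_trans hM hk
    have hstep := log_step p hp k hk2
    have hsub : (k + 1) - 1 = k := by omega
    rw [hsub]
    push_cast at ih ⊢
    omega

/-- Let `p` be odd and `ρ(p·t) = Σ_{n≥0} Cₙ pⁿ tⁿ` with
`ord_p(C₀), ord_p(C₁) ≥ ε` and `ord_p(Cₙ) ≥ -⌊log_p(n-1)⌋ - ord_p(n) + ε` for `n ≥ 2`.
If `ρ_M` is the truncation to degree `< M` (`M ≥ 2`), then for all `t ∈ ℤ_p`,
`ρ_M(p·t) - ρ(p·t) = -Σ_{n≥M} Cₙ pⁿ tⁿ ≡ 0 mod p^N`, where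
`N = M - ⌊log_p(M-1)⌋ - ⌊log_p(M)⌋ + ε`. -/
theorem stmt_14 (p : ℕ) [Fact p.Prime] (hp : p ≠ 2) (ε : ℤ) (C : ℕ → ℚ_[p])
    (h0 : C 0 ≠ 0 → ε ≤ (C 0).valuation)
    (h1 : C 1 ≠ 0 → ε ≤ (C 1).valuation)
    (h2 : ∀ n : ℕ, 2 ≤ n → C n ≠ 0 →
      -(Nat.log p (n - 1) : ℤ) - (padicValNat p n : ℤ) + ε ≤ (C n).valuation)
    (M : ℕ) (hM : 2 ≤ M) :
    ∀ t : ℤ_[p],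
      ‖∑' n : ℕ, (if M ≤ n then C n * (p : ℚ_[p]) ^ n * ((t : ℚ_[p])) ^ n else 0)‖
        ≤ (p : ℝ) ^ (-((M : ℤ) - (Nat.log p (M - 1) : ℤ) - (Nat.log p M : ℤ) + ε)) := by
  intro t
  have hp1 : 1 < p := (Fact.out : p.Prime).one_lt
  have hpR : (1 : ℝ) < (p : ℝ) := by exact_mod_cast hp1
  set N : ℤ := (M : ℤ) - (Nat.log p (M - 1) : ℤ) - (Nat.log p M : ℤ) + ε with hN
  have hRHSpos : (0 : ℝ) < (p : ℝ) ^ (-N) := zpow_pos (by positivity) _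
  refine IsUltrametricDist.norm_tsum_le_of_forall_le_of_nonneg hRHSpos.le ?_
  intro n
  by_cases hn : M ≤ n
  · simp only [if_pos hn]
    have hn2 : 2 ≤ n := le_trans hM hn
    by_cases hC : C n = 0
    · simp [hC]; positivity
    · have hval := h2 n hn2 hC
      -- norm of C n
      have hCn : ‖C n‖ = (p : ℝ) ^ (-(C n).valuation) := Padic.norm_eq_zpow_neg_valuation hC
      have hpn : ‖((p : ℚ_[p]) ^ n)‖ = (p : ℝ) ^ (-(n : ℤ)) := by
        rw [norm_pow, Padic.norm_p, ← zpow_neg_one, ← zpow_natCast ((p:ℝ)^(-1:ℤ)) n,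
          ← zpow_mul]
        ring_nf
      have htn : ‖((t : ℚ_[p])) ^ n‖ ≤ 1 := by
        rw [norm_pow]
        exact pow_le_one₀ (norm_nonneg _) (by simpa using t.norm_le_one)
      calc ‖C n * (p : ℚ_[p]) ^ n * ((t : ℚ_[p])) ^ n‖
          = ‖C n‖ * ‖((p : ℚ_[p]) ^ n)‖ * ‖((t : ℚ_[p])) ^ n‖ := by
            rw [norm_mul, norm_mul]
        _ ≤ ‖C n‖ * ‖((p : ℚ_[p]) ^ n)‖ * 1 := by
            apply mul_le_mul_of_nonneg_left htn (by positivity)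
        _ = (p : ℝ) ^ (-(C n).valuation + -(n : ℤ)) := by
            rw [mul_one, hCn, hpn, ← zpow_add₀ (by positivity : (p:ℝ) ≠ 0)]
        _ ≤ (p : ℝ) ^ (-N) := by
            apply zpow_le_zpow_right₀ hpR.le
            have hv : (padicValNat p n : ℤ) ≤ (Nat.log p n : ℤ) := by
              exact_mod_cast padicValNat_le_nat_log n
            have hmono := mono_key p hp1 M hM n hn
            omega
  · simp only [if_neg hn, norm_zero]
    positivity
end
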